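/- If 0 ≤ α ≤ 1/2, f is convex of order α with p = |f''(0)|/(2(1-α)) ≤ α/(2-α), then 2(1-α)·(1 + α·(1+p)/(1-p)) ≤ 2, and hence (1-|z|²)²|Sf(z)| ≤ 2 for all z in the unit disk. -/

import Mathlib

/-!
Since `Re (1 + z f''/f') > 0`, the Cayley transform of `1 + z f''/f'` is a Schwarz function
`z φ(z)`, so that `f''/f' = 2φ/(1 - zφ)` with `φ` a holomorphic map of the disc into the closed
disc. In terms of `φ` the Schwarzian becomes `Sf = 2φ'/(1 - zφ)²`, and the Schwarz–Pick
inequality `|φ'|(1 - |z|²) ≤ 1 - |φ|²` together with `(1 - |z|²)(1 - |φ|²) ≤ |1 - zφ|²`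
gives `(1 - |z|²)² |Sf| ≤ 2`.
-/

open Metric Set Complex ComplexConjugate Topology

noncomputable def mobius (a w : ℂ) : ℂ := (w + a) / (1 + conj a * w)

lemma mobius_zero (a : ℂ) : mobius a 0 = a := by simp [mobius]

lemma mobius_neg_self (a : ℂ) : mobius (-a) a = 0 := by simp [mobius]

lemma norm_sq_one_add_conj_mul_sub_norm_sq_add (a w : ℂ) :
    ‖1 + conj a * w‖ ^ 2 - ‖w + a‖ ^ 2 = (1 - ‖a‖ ^ 2) * (1 - ‖w‖ ^ 2) := by
  simp only [Complex.sq_norm, normSq_apply, add_re, add_im, mul_re, mul_im, conj_re, conj_im,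
    one_re, one_im]
  ring

lemma one_add_conj_mul_ne_zero {a w : ℂ} (ha : ‖a‖ < 1) (hw : ‖w‖ < 1) :
    1 + conj a * w ≠ 0 := by
  intro h
  have : ‖conj a * w‖ = 1 := by simp [eq_neg_of_add_eq_zero_right h]
  rw [norm_mul, Complex.norm_conj] at this
  nlinarith [norm_nonneg a, norm_nonneg w]

lemma mapsTo_mobius {a : ℂ} (ha : ‖a‖ < 1) : MapsTo (mobius a) (ball 0 1) (ball 0 1) := by
  intro w hw
  rw [mem_ball_zero_iff] at hw ⊢
  rw [mobius, norm_div, div_lt_one (norm_pos_iff.2 (one_add_conj_mul_ne_zero ha hw))]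
  refine lt_of_pow_lt_pow_left₀ 2 (norm_nonneg _) ?_
  have := mul_pos (sub_pos.2 (pow_lt_one₀ (norm_nonneg a) ha two_ne_zero))
    (sub_pos.2 (pow_lt_one₀ (norm_nonneg w) hw two_ne_zero))
  linarith [norm_sq_one_add_conj_mul_sub_norm_sq_add a w]

lemma hasDerivAt_mobius {a w : ℂ} (h : 1 + conj a * w ≠ 0) :
    HasDerivAt (mobius a) ((1 - ‖a‖ ^ 2 : ℝ) / (1 + conj a * w) ^ 2) w := by
  refine (((hasDerivAt_id w).add_const a).div
    (((hasDerivAt_id w).const_mul (conj a)).const_add 1) h).congr_deriv ?_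
  push_cast
  rw [← conj_mul', id]
  ring

lemma differentiableOn_mobius {a : ℂ} (ha : ‖a‖ < 1) : DifferentiableOn ℂ (mobius a) (ball 0 1) :=
  fun _ hw => (hasDerivAt_mobius (one_add_conj_mul_ne_zero ha (mem_ball_zero_iff.1 hw)))
    |>.differentiableAt.differentiableWithinAt

theorem norm_deriv_mul_le_of_mapsTo_ball {φ : ℂ → ℂ} {z : ℂ}
    (hφ : DifferentiableOn ℂ φ (ball 0 1)) (hmaps : MapsTo φ (ball 0 1) (ball 0 1))
    (hz : z ∈ ball 0 1) :
    ‖deriv φ z‖ * (1 - ‖z‖ ^ 2) ≤ 1 - ‖φ z‖ ^ 2 := by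
  set b := φ z
  have hz1 : ‖z‖ < 1 := mem_ball_zero_iff.1 hz
  have hb1 : ‖-b‖ < 1 := by simpa using mem_ball_zero_iff.1 (hmaps hz)
  have hb : 0 < 1 - ‖b‖ ^ 2 := by
    simpa using sub_pos.2 (pow_lt_one₀ (norm_nonneg _) hb1 two_ne_zero)
  -- conjugating by disc automorphisms moves `z ↦ b` to `0 ↦ 0`, where the Schwarz lemma applies
  set ψ := mobius (-b) ∘ φ ∘ mobius z
  have hψ0 : ψ 0 = 0 := by simp [ψ, mobius_zero, b, mobius_neg_self]
  have hψmaps : MapsTo ψ (ball 0 1) (closedBall (ψ 0) 1) := by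
    rw [hψ0]
    exact ((mapsTo_mobius hb1).comp (hmaps.comp (mapsTo_mobius hz1))).mono_right
      ball_subset_closedBall
  have hψd : DifferentiableOn ℂ ψ (ball 0 1) :=
    (differentiableOn_mobius hb1).comp (hφ.comp (differentiableOn_mobius hz1) (mapsTo_mobius hz1))
      (hmaps.comp (mapsTo_mobius hz1))
  have hderiv : HasDerivAt ψ (((1 - ‖z‖ ^ 2) / (1 - ‖b‖ ^ 2) : ℝ) * deriv φ z) 0 := by
    have hφz : HasDerivAt φ (deriv φ z) (mobius z 0) := by
      rw [mobius_zero]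
      exact (hφ.differentiableAt (isOpen_ball.mem_nhds hz)).hasDerivAt
    have hden : 1 + conj (-b) * b = ((1 - ‖b‖ ^ 2 : ℝ) : ℂ) := by
      push_cast; rw [map_neg, neg_mul, conj_mul']; ring
    have hN := hasDerivAt_mobius (a := -b) (w := b) (by rw [hden]; exact_mod_cast hb.ne')
    refine (hN.comp_of_eq 0 (hφz.comp 0 (hasDerivAt_mobius (by simp)))
      (by simp [mobius_zero, b])).congr_deriv ?_
    rw [hden, norm_neg]
    push_cast
    field_simp
    simp
  have hS := norm_deriv_le_div_of_mapsTo_ball hψd hψmaps one_pos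
  rw [hderiv.deriv, norm_mul, Complex.norm_real, Real.norm_of_nonneg
    (div_nonneg (sub_nonneg.2 (pow_le_one₀ (norm_nonneg z) hz1.le)) hb.le), div_one,
    div_mul_eq_mul_div, div_le_one hb] at hS
  linarith

theorem norm_deriv_mul_le_of_mapsTo_closedBall {φ : ℂ → ℂ} {z : ℂ}
    (hφ : DifferentiableOn ℂ φ (ball 0 1)) (hmaps : MapsTo φ (ball 0 1) (closedBall 0 1))
    (hz : z ∈ ball 0 1) :
    ‖deriv φ z‖ * (1 - ‖z‖ ^ 2) ≤ 1 - ‖φ z‖ ^ 2 := by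
  by_cases hball : MapsTo φ (ball 0 1) (ball 0 1)
  · exact norm_deriv_mul_le_of_mapsTo_ball hφ hball hz
  -- otherwise `‖φ‖` attains its maximum `1`, so `φ` is constant by the maximum modulus principle
  obtain ⟨x, hx, hφx⟩ : ∃ x ∈ ball (0 : ℂ) 1, ‖φ x‖ = 1 := by
    simp only [MapsTo, not_forall, mem_ball_zero_iff] at hball
    obtain ⟨x, hx, hφx⟩ := hball
    exact ⟨x, mem_ball_zero_iff.2 hx, le_antisymm (mem_closedBall_zero_iff.1
      (hmaps (mem_ball_zero_iff.2 hx))) (not_lt.1 hφx)⟩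
  have hconst : EqOn φ (fun _ ↦ φ x) (ball 0 1) :=
    eqOn_of_isPreconnected_of_isMaxOn_norm (convex_ball _ _).isPreconnected isOpen_ball hφ hx
      fun y hy ↦ by simpa [hφx] using hmaps hy
  have hderiv : deriv φ z = 0 := by
    rw [(hconst.eventuallyEq_of_mem (isOpen_ball.mem_nhds hz)).deriv_eq, deriv_const]
  rw [hderiv, norm_zero, zero_mul, sub_nonneg]
  exact pow_le_one₀ (norm_nonneg _) (mem_closedBall_zero_iff.1 (hmaps hz))

lemma mapsTo_closedBall_of_norm_mul_lt_one {φ : ℂ → ℂ} (hφ : DifferentiableOn ℂ φ (ball 0 1))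
    (h : ∀ z ∈ ball (0 : ℂ) 1, ‖z * φ z‖ < 1) : MapsTo φ (ball 0 1) (closedBall 0 1) := by
  set ω : ℂ → ℂ := fun w ↦ w * φ w
  have hω : DifferentiableOn ℂ ω (ball 0 1) := differentiableOn_id.mul hφ
  have hωmaps : MapsTo ω (ball 0 1) (closedBall (ω 0) 1) := fun w hw ↦ by
    simpa [ω] using (h w hw).le
  intro z hz
  have hdslope : dslope ω 0 z = φ z := by
    rcases eq_or_ne z 0 with rfl | hz0
    · have hd : HasDerivAt ω (1 * φ 0 + 0 * deriv φ 0) 0 :=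
        (hasDerivAt_id' 0).mul (hφ.differentiableAt (isOpen_ball.mem_nhds hz)).hasDerivAt
      simp [dslope_same, hd.deriv]
    · simp [dslope_of_ne _ hz0, slope_def_field, ω, hz0]
  simpa [hdslope] using norm_dslope_le_div_of_mapsTo_ball hω hωmaps hz

lemma norm_lt_norm_two_add {w : ℂ} (hw : 0 < (1 + w).re) : ‖w‖ < ‖2 + w‖ := by
  refine lt_of_pow_lt_pow_left₀ 2 (norm_nonneg _) ?_
  simp only [Complex.sq_norm, normSq_apply, add_re, add_im, re_ofNat, im_ofNat, one_re] at hw ⊢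
  nlinarith

theorem exists_eq_two_mul_div_of_re_pos {q : ℂ → ℂ} (hq : DifferentiableOn ℂ q (ball 0 1))
    (hre : ∀ z ∈ ball (0 : ℂ) 1, 0 < (1 + z * q z).re) :
    ∃ φ : ℂ → ℂ, DifferentiableOn ℂ φ (ball 0 1) ∧ MapsTo φ (ball 0 1) (closedBall 0 1) ∧
      ∀ z ∈ ball (0 : ℂ) 1, q z = 2 * φ z / (1 - z * φ z) := by
  have hden : ∀ z ∈ ball (0 : ℂ) 1, 2 + z * q z ≠ 0 := fun z hz h ↦ by
    simpa [h] using (norm_nonneg _).trans_lt (norm_lt_norm_two_add (hre z hz))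
  -- `z * φ z = (h z - 1) / (h z + 1)` is the Cayley transform of `h z = 1 + z * q z`
  refine ⟨fun z ↦ q z / (2 + z * q z), ?_, ?_, fun z hz ↦ ?_⟩
  · exact hq.div (differentiableOn_const 2 |>.add (differentiableOn_id.mul hq)) hden
  · refine mapsTo_closedBall_of_norm_mul_lt_one
      (hq.div (differentiableOn_const 2 |>.add (differentiableOn_id.mul hq)) hden) fun z hz ↦ ?_
    rw [mul_div_assoc', norm_div, div_lt_one (norm_pos_iff.2 (hden z hz))]
    exact norm_lt_norm_two_add (hre z hz)
  · have hz2 := hden z hz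
    have h1 : 1 - z * (q z / (2 + z * q z)) = 2 / (2 + z * q z) := by
      field_simp
      ring
    dsimp only
    rw [h1, mul_div_assoc', div_div_div_cancel_right₀ hz2, mul_div_cancel_left₀ _ two_ne_zero]

noncomputable def schwarzian (f : ℂ → ℂ) (z : ℂ) : ℂ :=
  deriv (deriv (deriv f)) z / deriv f z - 3 / 2 * (deriv (deriv f) z / deriv f z) ^ 2

lemma schwarzian_eq_deriv_logDeriv_sub {f : ℂ → ℂ} {z : ℂ}
    (hf₁ : DifferentiableAt ℂ (deriv f) z) (hf₂ : DifferentiableAt ℂ (deriv (deriv f)) z)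
    (hf' : deriv f z ≠ 0) :
    schwarzian f z = deriv (logDeriv (deriv f)) z - logDeriv (deriv f) z ^ 2 / 2 := by
  have hd : HasDerivAt (logDeriv (deriv f)) ((deriv (deriv (deriv f)) z * deriv f z -
      deriv (deriv f) z * deriv (deriv f) z) / deriv f z ^ 2) z :=
    hf₂.hasDerivAt.div hf₁.hasDerivAt hf'
  rw [schwarzian, hd.deriv, logDeriv_apply]
  field_simp
  ring

lemma deriv_two_mul_div_one_sub_mul_sub {φ : ℂ → ℂ} {z : ℂ} (hφ : DifferentiableAt ℂ φ z)
    (hz : 1 - z * φ z ≠ 0) :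
    deriv (fun w ↦ 2 * φ w / (1 - w * φ w)) z - (2 * φ z / (1 - z * φ z)) ^ 2 / 2 =
      2 * deriv φ z / (1 - z * φ z) ^ 2 := by
  have hd : HasDerivAt (fun w ↦ 2 * φ w / (1 - w * φ w))
      ((2 * deriv φ z * (1 - z * φ z) - 2 * φ z * -(1 * φ z + z * deriv φ z)) /
        (1 - z * φ z) ^ 2) z :=
    (hφ.hasDerivAt.const_mul 2).div (((hasDerivAt_id' z).mul hφ.hasDerivAt).const_sub 1) hz
  rw [hd.deriv]
  field_simp
  ring

lemma one_sub_sq_mul_one_sub_sq_le_norm_one_sub_mul_sq {z w : ℂ} (hz : ‖z‖ ≤ 1) (hw : ‖w‖ ≤ 1) :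
    (1 - ‖z‖ ^ 2) * (1 - ‖w‖ ^ 2) ≤ ‖1 - z * w‖ ^ 2 := by
  have hzw : ‖z‖ * ‖w‖ ≤ 1 := mul_le_one₀ hz (norm_nonneg w) hw
  have htri : 1 - ‖z‖ * ‖w‖ ≤ ‖1 - z * w‖ := by
    simpa [norm_mul] using norm_sub_norm_le (1 : ℂ) (z * w)
  nlinarith [sq_nonneg (‖z‖ - ‖w‖)]

theorem one_sub_sq_sq_mul_norm_two_mul_deriv_div_le_two {φ : ℂ → ℂ} {z : ℂ}
    (hφ : DifferentiableOn ℂ φ (ball 0 1)) (hmaps : MapsTo φ (ball 0 1) (closedBall 0 1))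
    (hz : z ∈ ball 0 1) :
    (1 - ‖z‖ ^ 2) ^ 2 * ‖2 * deriv φ z / (1 - z * φ z) ^ 2‖ ≤ 2 := by
  have hz1 : ‖z‖ ≤ 1 := (mem_ball_zero_iff.1 hz).le
  have hφz : ‖φ z‖ ≤ 1 := mem_closedBall_zero_iff.1 (hmaps hz)
  have hpick := norm_deriv_mul_le_of_mapsTo_closedBall hφ hmaps hz
  have hmul := one_sub_sq_mul_one_sub_sq_le_norm_one_sub_mul_sq hz1 hφz
  have hz2 : 0 ≤ 1 - ‖z‖ ^ 2 := sub_nonneg.2 (pow_le_one₀ (norm_nonneg z) hz1)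
  rw [norm_div, norm_mul, norm_pow, Complex.norm_two, ← mul_div_assoc]
  refine div_le_of_le_mul₀ (by positivity) zero_le_two ?_
  nlinarith [mul_le_mul_of_nonneg_left hpick hz2]

theorem one_sub_sq_sq_mul_norm_schwarzian_le_two {f : ℂ → ℂ}
    (hf : DifferentiableOn ℂ f (ball 0 1)) (hf' : ∀ z ∈ ball (0 : ℂ) 1, deriv f z ≠ 0)
    (hconv : ∀ z ∈ ball (0 : ℂ) 1, 0 < (1 + z * logDeriv (deriv f) z).re)
    {z : ℂ} (hz : z ∈ ball 0 1) :
    (1 - ‖z‖ ^ 2) ^ 2 * ‖schwarzian f z‖ ≤ 2 := by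
  have hf₁ : AnalyticOnNhd ℂ (deriv f) (ball 0 1) := (hf.analyticOnNhd isOpen_ball).deriv
  have hf₂ : AnalyticOnNhd ℂ (deriv (deriv f)) (ball 0 1) := hf₁.deriv
  obtain ⟨φ, hφ, hmaps, hrepr⟩ := exists_eq_two_mul_div_of_re_pos (q := logDeriv (deriv f))
    (hf₂.differentiableOn.div hf₁.differentiableOn hf') hconv
  have hden : 1 - z * φ z ≠ 0 := by
    have : ‖z * φ z‖ < 1 := by
      rw [norm_mul]
      exact mul_lt_one_of_nonneg_of_lt_one_left (norm_nonneg z) (mem_ball_zero_iff.1 hz)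
        (mem_closedBall_zero_iff.1 (hmaps hz))
    exact sub_ne_zero.2 fun h ↦ by simp [← h] at this
  have heq : logDeriv (deriv f) =ᶠ[𝓝 z] fun w ↦ 2 * φ w / (1 - w * φ w) :=
    Filter.eventually_of_mem (isOpen_ball.mem_nhds hz) hrepr
  rw [schwarzian_eq_deriv_logDeriv_sub (hf₁ z hz).differentiableAt (hf₂ z hz).differentiableAt
    (hf' z hz), heq.deriv_eq, hrepr z hz,
    deriv_two_mul_div_one_sub_mul_sub (hφ.differentiableAt (isOpen_ball.mem_nhds hz)) hden]
  exact one_sub_sq_sq_mul_norm_two_mul_deriv_div_le_two hφ hmaps hz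

theorem two_mul_one_sub_mul_one_add_mul_div_le_two {α p : ℝ} (hα₀ : 0 ≤ α) (hα₁ : α < 1)
    (hp : p ≤ α / (2 - α)) :
    2 * (1 - α) * (1 + α * ((1 + p) / (1 - p))) ≤ 2 := by
  have h2α : 0 < 2 - α := by linarith
  rw [le_div_iff₀ h2α] at hp
  have hp1 : 0 < 1 - p := by nlinarith
  have hα : 0 < 1 - α := by linarith
  -- `p ≤ α / (2 - α)` says exactly `(1 + p) / (1 - p) ≤ 1 / (1 - α)`
  have ht : (1 + p) / (1 - p) ≤ 1 / (1 - α) := by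
    rw [div_le_div_iff₀ hp1 hα]
    linarith
  calc 2 * (1 - α) * (1 + α * ((1 + p) / (1 - p)))
      ≤ 2 * (1 - α) * (1 + α * (1 / (1 - α))) := by gcongr
    _ = 2 := by field_simp; ring

theorem schwarzian_bound_improves_suita_small_alpha_general
    (f : ℂ → ℂ) (α : ℝ) (hα0 : 0 ≤ α) (hα1 : α ≤ 1 / 2)
    (hf : DifferentiableOn ℂ f (Metric.ball 0 1))
    (hf' : ∀ z ∈ Metric.ball (0:ℂ) 1, deriv f z ≠ 0)
    (hconv : ∀ z ∈ Metric.ball (0:ℂ) 1,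
      α < (1 + z * (deriv (deriv f) z / deriv f z)).re)
    (p : ℝ)
    (hpb : p ≤ α / (2 - α)) :
    2 * (1 - α) * (1 + α * ((1 + p) / (1 - p))) ≤ 2 ∧
    ∀ z ∈ Metric.ball (0:ℂ) 1,
      (1 - ‖z‖ ^ 2) ^ 2 *
        ‖deriv (deriv (deriv f)) z / deriv f z
          - 3 / 2 * (deriv (deriv f) z / deriv f z) ^ 2‖ ≤ 2 :=
  ⟨two_mul_one_sub_mul_one_add_mul_div_le_two hα0 (by linarith) hpb,
    fun _ hz ↦ one_sub_sq_sq_mul_norm_schwarzian_le_two hf hf'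
      (fun z hz ↦ hα0.trans_lt (hconv z hz)) hz⟩

theorem schwarzian_bound_improves_suita_small_alpha
    (f : ℂ → ℂ) (α : ℝ) (hα0 : 0 ≤ α) (hα1 : α ≤ 1 / 2)
    (hf : DifferentiableOn ℂ f (Metric.ball 0 1))
    (hf' : ∀ z ∈ Metric.ball (0:ℂ) 1, deriv f z ≠ 0)
    (hf0 : f 0 = 0) (hf1 : deriv f 0 = 1)
    (hconv : ∀ z ∈ Metric.ball (0:ℂ) 1,
      α < (1 + z * (deriv (deriv f) z / deriv f z)).re)
    (p : ℝ) (hp : p = ‖deriv (deriv f) 0‖ / (2 * (1 - α)))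
    (hpb : p ≤ α / (2 - α)) :
    2 * (1 - α) * (1 + α * ((1 + p) / (1 - p))) ≤ 2 ∧
    ∀ z ∈ Metric.ball (0:ℂ) 1,
      (1 - ‖z‖ ^ 2) ^ 2 *
        ‖deriv (deriv (deriv f)) z / deriv f z
          - 3 / 2 * (deriv (deriv f) z / deriv f z) ^ 2‖ ≤ 2 :=
  schwarzian_bound_improves_suita_small_alpha_general f α hα0 hα1 hf hf' hconv p hpb
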